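/- Let g₁, g₂, g₃ : F_q^d → Ω be scalar respecting functions with Fourier expansions gᵢ = ∑_ρ ĝᵢ(ρ)χ_ρ. Then the probability over uniformly random independent α, β ∈ F_q^d that g₁(α)·g₂(β) = g₃(α+β) equals 1/q + ((q-1)/q)·∑_{ρ ∈ F_q^d} ĝ₁(ρ)·ĝ₂(ρ)·ĝ₃(ρ). -/

import Mathlib

open scoped Classical
open Finset Complex

noncomputable def omegaC (q : ℕ) : ℂ := Complex.exp (2 * Real.pi * Complex.I / q)

noncomputable def chiC (q d : ℕ) (ρ α : Fin d → ZMod q) : ℂ :=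
  omegaC q ^ (∑ i, ρ i * α i).val

noncomputable def hatC (q d : ℕ) [NeZero q] (g : (Fin d → ZMod q) → ℂ)
    (ρ : Fin d → ZMod q) : ℂ :=
  (∑ α : Fin d → ZMod q, g α * (starRingEnd ℂ) (chiC q d ρ α)) / (q : ℂ) ^ d

section aux
variable (q : ℕ) [Fact q.Prime]

lemma hq2 : 1 < q := (Fact.out (p := q.Prime)).one_lt
lemma hq0 : q ≠ 0 := (Fact.out (p := q.Prime)).ne_zero

lemma omega_prim : IsPrimitiveRoot (omegaC q) q :=
  Complex.isPrimitiveRoot_exp q (hq0 q)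

lemma omega_pow_q : omegaC q ^ q = 1 := (omega_prim q).pow_eq_one

lemma omega_ne_zero : omegaC q ≠ 0 := Complex.exp_ne_zero _

lemma omega_pow_mod (n : ℕ) : omegaC q ^ (n % q) = omegaC q ^ n := by
  conv_rhs => rw [← Nat.mod_add_div n q]
  rw [pow_add, pow_mul, omega_pow_q, one_pow, mul_one]

/-- additive character -/
noncomputable def eC (c : ZMod q) : ℂ := omegaC q ^ c.val

variable {q}

lemma eC_zero : eC q 0 = 1 := by
  haveI : NeZero q := ⟨hq0 q⟩
  simp [eC]

lemma eC_add (a b : ZMod q) : eC q (a + b) = eC q a * eC q b := by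
  haveI : NeZero q := ⟨hq0 q⟩
  rw [eC, eC, eC, ZMod.val_add, omega_pow_mod, pow_add]

lemma eC_ne_zero (a : ZMod q) : eC q a ≠ 0 := pow_ne_zero _ (omega_ne_zero q)

lemma eC_neg (a : ZMod q) : eC q (-a) = (eC q a)⁻¹ := by
  have h : eC q a * eC q (-a) = 1 := by rw [← eC_add]; simp [eC_zero]
  exact (inv_eq_of_mul_eq_one_right h).symm

lemma eC_conj (a : ZMod q) : (starRingEnd ℂ) (eC q a) = eC q (-a) := by
  have habs : ‖eC q a‖ = 1 := by
    rw [eC, norm_pow, (omega_prim q).norm'_eq_one (hq0 q), one_pow]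
  rw [eC_neg, ← Complex.inv_eq_conj habs]

lemma eC_sum {ι : Type*} (s : Finset ι) (f : ι → ZMod q) :
    eC q (∑ i ∈ s, f i) = ∏ i ∈ s, eC q (f i) := by
  induction s using Finset.induction with
  | empty => simp [eC_zero]
  | insert a s h ih => rw [Finset.sum_insert h, Finset.prod_insert h, eC_add, ih]

lemma eC_pow (a : ZMod q) (n : ℕ) : eC q a ^ n = eC q (n * a) := by
  induction n with
  | zero => simp [eC_zero]
  | succ n ih =>
    rw [pow_succ, ih, ← eC_add]
    congr 1
    push_cast
    ring

lemma chiC_eq (d : ℕ) (ρ α : Fin d → ZMod q) : chiC q d ρ α = eC q (∑ i, ρ i * α i) := rfl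

/-- geometric sum -/
lemma eC_sum_univ : ∑ c : ZMod q, eC q c = 0 := by
  haveI : NeZero q := ⟨hq0 q⟩
  have h1 : ∑ c : ZMod q, eC q c = ∑ k ∈ Finset.range q, omegaC q ^ k := by
    exact Finset.sum_nbij' (i := fun c => ZMod.val c) (j := fun k => (k : ZMod q))
      (fun a _ => Finset.mem_range.2 (ZMod.val_lt a)) (fun a _ => Finset.mem_univ _)
      (fun a _ => ZMod.natCast_rightInverse a)
      (fun a ha => ZMod.val_cast_of_lt (Finset.mem_range.1 ha))
      (fun a _ => rfl)
  rw [h1, (omega_prim q).geom_sum_eq_zero (hq2 q)]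

lemma eC_mul_sum (x : ZMod q) :
    ∑ c : ZMod q, eC q (c * x) = if x = 0 then (q : ℂ) else 0 := by
  by_cases hx : x = 0
  · subst hx; simp [eC_zero, ZMod.card]
  · rw [if_neg hx]
    have := Equiv.sum_comp (Equiv.mulRight₀ x hx) (eC q)
    simp only [Equiv.mulRight₀_apply] at this
    rw [this, eC_sum_univ]

lemma eC_orth (d : ℕ) (δ : Fin d → ZMod q) :
    ∑ ρ : Fin d → ZMod q, eC q (∑ i, ρ i * δ i) = if δ = 0 then (q : ℂ) ^ d else 0 := by
  simp_rw [eC_sum]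
  rw [← Fintype.piFinset_univ,
    ← Finset.prod_univ_sum (fun _ => (Finset.univ : Finset (ZMod q)))
      (fun i j => eC q (j * δ i))]
  by_cases h : δ = 0
  · subst h; simp [eC_mul_sum, eC_zero, ZMod.card]
  · obtain ⟨i, hi⟩ : ∃ i, δ i ≠ 0 := by
      by_contra hc; push_neg at hc; exact h (funext hc)
    rw [if_neg h]
    apply Finset.prod_eq_zero (Finset.mem_univ i)
    rw [eC_mul_sum, if_neg hi]

lemma chi_conj_mul (d : ℕ) (ρ α γ : Fin d → ZMod q) :
    (starRingEnd ℂ) (chiC q d ρ α) * chiC q d ρ γ = eC q (∑ i, ρ i * (γ - α) i) := by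
  rw [chiC_eq, chiC_eq, eC_conj, ← eC_add]
  congr 1
  simp [Pi.sub_apply, mul_sub, Finset.sum_sub_distrib]
  ring

lemma fourier_inv (d : ℕ) (g : (Fin d → ZMod q) → ℂ) (γ : Fin d → ZMod q) :
    ∑ ρ : Fin d → ZMod q, hatC q d g ρ * chiC q d ρ γ = g γ := by
  haveI : NeZero q := ⟨hq0 q⟩
  have hqd : ((q : ℂ)) ^ d ≠ 0 := pow_ne_zero _ (Nat.cast_ne_zero.2 (hq0 q))
  unfold hatC
  simp_rw [div_mul_eq_mul_div]
  rw [← Finset.sum_div, div_eq_iff hqd]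
  simp_rw [Finset.sum_mul, mul_assoc, chi_conj_mul]
  rw [Finset.sum_comm]
  simp_rw [← Finset.mul_sum, eC_orth]
  rw [Finset.sum_eq_single γ]
  · simp
  · intro b _ hb
    rw [if_neg, mul_zero]
    intro hc
    exact hb (sub_eq_zero.mp hc).symm
  · intro h; exact absurd (Finset.mem_univ γ) h

lemma chiC_add (d : ℕ) (ρ α β : Fin d → ZMod q) :
    chiC q d ρ (α + β) = chiC q d ρ α * chiC q d ρ β := by
  rw [chiC_eq, chiC_eq, chiC_eq, ← eC_add]
  congr 1
  simp [mul_add, Finset.sum_add_distrib]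

lemma chiC_neg (d : ℕ) (ρ α : Fin d → ZMod q) :
    chiC q d ρ (-α) = (starRingEnd ℂ) (chiC q d ρ α) := by
  rw [chiC_eq, chiC_eq, eC_conj]
  congr 1
  simp

lemma conj_g {d : ℕ} {g : (Fin d → ZMod q) → ℂ}
    (hΩ : ∀ α, ∃ k : ℕ, g α = omegaC q ^ k)
    (hscal : ∀ (j : ZMod q) (α : Fin d → ZMod q), g (j • α) = g α ^ j.val)
    (α : Fin d → ZMod q) : (starRingEnd ℂ) (g α) = g (-α) := by
  haveI : NeZero q := ⟨hq0 q⟩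
  obtain ⟨k, hk⟩ := hΩ α
  have hnorm : ‖g α‖ = 1 := by
    rw [hk, norm_pow, (omega_prim q).norm'_eq_one (hq0 q), one_pow]
  have hq1 : g α ^ q = 1 := by
    rw [hk, ← pow_mul, mul_comm, pow_mul, omega_pow_q, one_pow]
  have hval : (-1 : ZMod q).val = q - 1 := by
    have h1 : (-1 : ZMod q) = ((q - 1 : ℕ) : ZMod q) := by
      have h0 : ((q : ℕ) : ZMod q) = 0 := ZMod.natCast_self q
      push_cast [Nat.cast_sub (le_of_lt (hq2 q))]
      rw [h0]; ring
    rw [h1, ZMod.val_cast_of_lt (Nat.sub_lt ((Fact.out (p := q.Prime)).pos) one_pos)]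
  have hneg : g (-α) = g α ^ (q - 1) := by
    have := hscal (-1) α
    rw [neg_one_smul, hval] at this
    exact this
  have hmul : g (-α) * g α = 1 := by
    rw [hneg, ← pow_succ, Nat.sub_add_cancel (le_of_lt (hq2 q)), hq1]
  rw [← Complex.inv_eq_conj hnorm]
  exact inv_eq_of_mul_eq_one_left hmul

lemma hat_real {d : ℕ} {g : (Fin d → ZMod q) → ℂ}
    (hΩ : ∀ α, ∃ k : ℕ, g α = omegaC q ^ k)
    (hscal : ∀ (j : ZMod q) (α : Fin d → ZMod q), g (j • α) = g α ^ j.val)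
    (ρ : Fin d → ZMod q) : (starRingEnd ℂ) (hatC q d g ρ) = hatC q d g ρ := by
  haveI : NeZero q := ⟨hq0 q⟩
  unfold hatC
  rw [map_div₀, map_sum]
  congr 1
  · calc ∑ α : Fin d → ZMod q, (starRingEnd ℂ) (g α * (starRingEnd ℂ) (chiC q d ρ α))
        = ∑ α : Fin d → ZMod q, g (-α) * chiC q d ρ α := by
          apply Finset.sum_congr rfl; intro α _
          rw [map_mul, Complex.conj_conj, conj_g hΩ hscal]
      _ = ∑ α : Fin d → ZMod q, g α * chiC q d ρ (-α) := by
          have := Equiv.sum_comp (Equiv.neg (Fin d → ZMod q))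
            (fun α => g α * chiC q d ρ (-α))
          simp only [Equiv.neg_apply, neg_neg] at this
          exact this
      _ = ∑ α : Fin d → ZMod q, g α * (starRingEnd ℂ) (chiC q d ρ α) := by
          simp_rw [chiC_neg]
  · simp

lemma sum_eq_hat {d : ℕ} (g : (Fin d → ZMod q) → ℂ) (ρ : Fin d → ZMod q) :
    ∑ α : Fin d → ZMod q, g α * (starRingEnd ℂ) (chiC q d ρ α)
      = hatC q d g ρ * (q : ℂ) ^ d := by
  haveI : NeZero q := ⟨hq0 q⟩
  rw [hatC, div_mul_cancel₀]
  exact pow_ne_zero _ (Nat.cast_ne_zero.2 (hq0 q))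

lemma Ssum {d : ℕ} (g₁ g₂ g₃ : (Fin d → ZMod q) → ℂ) :
    ∑ p : (Fin d → ZMod q) × (Fin d → ZMod q),
        g₁ p.1 * g₂ p.2 * (starRingEnd ℂ) (g₃ (p.1 + p.2))
      = (q : ℂ) ^ d * (q : ℂ) ^ d *
        ∑ ρ : Fin d → ZMod q,
          hatC q d g₁ ρ * hatC q d g₂ ρ * (starRingEnd ℂ) (hatC q d g₃ ρ) := by
  haveI : NeZero q := ⟨hq0 q⟩
  have h3 : ∀ γ, (starRingEnd ℂ) (g₃ γ)
      = ∑ ρ : Fin d → ZMod q,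
          (starRingEnd ℂ) (hatC q d g₃ ρ) * (starRingEnd ℂ) (chiC q d ρ γ) := by
    intro γ
    conv_lhs => rw [← fourier_inv d g₃ γ]
    rw [map_sum]
    simp_rw [map_mul]
  have key : ∀ p : (Fin d → ZMod q) × (Fin d → ZMod q),
      g₁ p.1 * g₂ p.2 * (starRingEnd ℂ) (g₃ (p.1 + p.2))
      = ∑ ρ : Fin d → ZMod q, (g₁ p.1 * (starRingEnd ℂ) (chiC q d ρ p.1))
          * (g₂ p.2 * (starRingEnd ℂ) (chiC q d ρ p.2))
          * (starRingEnd ℂ) (hatC q d g₃ ρ) := by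
    intro p
    rw [h3 (p.1 + p.2), Finset.mul_sum]
    apply Finset.sum_congr rfl
    intro ρ _
    rw [chiC_add, map_mul]
    ring
  simp_rw [key]
  rw [Finset.sum_comm]
  rw [Finset.mul_sum]
  apply Finset.sum_congr rfl
  intro ρ _
  rw [Fintype.sum_prod_type]
  simp_rw [← Finset.sum_mul, ← Finset.mul_sum]
  rw [← Finset.sum_mul, sum_eq_hat, sum_eq_hat]
  ring
end aux

theorem stmt_3 (q d : ℕ) [Fact q.Prime]
    (g₁ g₂ g₃ : (Fin d → ZMod q) → ℂ)
    (hΩ₁ : ∀ α, ∃ k : ℕ, g₁ α = omegaC q ^ k)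
    (hΩ₂ : ∀ α, ∃ k : ℕ, g₂ α = omegaC q ^ k)
    (hΩ₃ : ∀ α, ∃ k : ℕ, g₃ α = omegaC q ^ k)
    (hscal₁ : ∀ (j : ZMod q) (α : Fin d → ZMod q), g₁ (j • α) = g₁ α ^ j.val)
    (hscal₂ : ∀ (j : ZMod q) (α : Fin d → ZMod q), g₂ (j • α) = g₂ α ^ j.val)
    (hscal₃ : ∀ (j : ZMod q) (α : Fin d → ZMod q), g₃ (j • α) = g₃ α ^ j.val) :
    ((Finset.univ.filter fun p : (Fin d → ZMod q) × (Fin d → ZMod q) =>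
        g₁ p.1 * g₂ p.2 = g₃ (p.1 + p.2)).card : ℂ) / (q : ℂ) ^ (2 * d)
      = 1 / q + ((q : ℂ) - 1) / q *
          ∑ ρ : Fin d → ZMod q, hatC q d g₁ ρ * hatC q d g₂ ρ * hatC q d g₃ ρ := by
  haveI : NeZero q := ⟨hq0 q⟩
  set u : ((Fin d → ZMod q) × (Fin d → ZMod q)) → ℂ :=
    fun p => g₁ p.1 * g₂ p.2 * (starRingEnd ℂ) (g₃ (p.1 + p.2)) with hu
  have hnorm : ∀ (g : (Fin d → ZMod q) → ℂ), (∀ α, ∃ k : ℕ, g α = omegaC q ^ k) →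
      ∀ α, ‖g α‖ = 1 := by
    intro g hΩ α; obtain ⟨k, hk⟩ := hΩ α
    rw [hk, norm_pow, (omega_prim q).norm'_eq_one (hq0 q), one_pow]
  have hgq : ∀ (g : (Fin d → ZMod q) → ℂ), (∀ α, ∃ k : ℕ, g α = omegaC q ^ k) →
      ∀ α, g α ^ q = 1 := by
    intro g hΩ α; obtain ⟨k, hk⟩ := hΩ α
    rw [hk, ← pow_mul, mul_comm, pow_mul, omega_pow_q, one_pow]
  have huq : ∀ p, u p ^ q = 1 := by
    intro p
    simp only [hu, mul_pow, ← map_pow]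
    rw [hgq g₁ hΩ₁, hgq g₂ hΩ₂, hgq g₃ hΩ₃]
    simp
  have hiff : ∀ p : (Fin d → ZMod q) × (Fin d → ZMod q),
      (g₁ p.1 * g₂ p.2 = g₃ (p.1 + p.2)) ↔ u p = 1 := by
    intro p
    have hb : g₃ (p.1 + p.2) * (starRingEnd ℂ) (g₃ (p.1 + p.2)) = 1 := by
      rw [Complex.mul_conj, Complex.normSq_eq_norm_sq, hnorm g₃ hΩ₃]
      norm_num
    constructor
    · intro h; rw [hu]; simp only [h, hb]
    · intro h
      have hc : (starRingEnd ℂ) (g₃ (p.1 + p.2)) ≠ 0 := by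
        intro h0; rw [h0, mul_zero] at hb; exact one_ne_zero hb.symm
      exact mul_right_cancel₀ hc (h.trans hb.symm)
  have hgeom : ∀ p : (Fin d → ZMod q) × (Fin d → ZMod q),
      (if g₁ p.1 * g₂ p.2 = g₃ (p.1 + p.2) then (q : ℂ) else 0)
        = ∑ j ∈ Finset.range q, u p ^ j := by
    intro p
    by_cases hcu : u p = 1
    · rw [if_pos ((hiff p).mpr hcu), hcu]
      simp
    · rw [if_neg (fun hc => hcu ((hiff p).mp hc)), geom_sum_eq hcu, huq p, sub_self, zero_div]
  have hcard : ((Finset.univ.filter fun p : (Fin d → ZMod q) × (Fin d → ZMod q) =>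
        g₁ p.1 * g₂ p.2 = g₃ (p.1 + p.2)).card : ℂ) * q
      = ∑ j ∈ Finset.range q, ∑ p : (Fin d → ZMod q) × (Fin d → ZMod q), u p ^ j := by
    rw [← Finset.sum_comm]
    calc ((Finset.univ.filter fun p : (Fin d → ZMod q) × (Fin d → ZMod q) =>
          g₁ p.1 * g₂ p.2 = g₃ (p.1 + p.2)).card : ℂ) * q
        = ∑ _p ∈ (Finset.univ.filter fun p : (Fin d → ZMod q) × (Fin d → ZMod q) =>
            g₁ p.1 * g₂ p.2 = g₃ (p.1 + p.2)), (q : ℂ) := by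
          rw [Finset.sum_const, nsmul_eq_mul]
      _ = ∑ p : (Fin d → ZMod q) × (Fin d → ZMod q),
            (if g₁ p.1 * g₂ p.2 = g₃ (p.1 + p.2) then (q : ℂ) else 0) :=
          Finset.sum_filter _ _
      _ = ∑ p : (Fin d → ZMod q) × (Fin d → ZMod q), ∑ j ∈ Finset.range q, u p ^ j :=
          Finset.sum_congr rfl (fun p _ => hgeom p)
  have hTj : ∀ j ∈ (Finset.range q).erase 0,
      ∑ p : (Fin d → ZMod q) × (Fin d → ZMod q), u p ^ j
        = ∑ p : (Fin d → ZMod q) × (Fin d → ZMod q), u p := by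
    intro j hj
    obtain ⟨hj0, hjq⟩ := Finset.mem_erase.mp hj
    have hjlt : j < q := Finset.mem_range.mp hjq
    have hcval : ((j : ZMod q)).val = j := ZMod.val_cast_of_lt hjlt
    have hc0 : (j : ZMod q) ≠ 0 := by
      intro h; rw [h, ZMod.val_zero] at hcval; exact hj0 hcval.symm
    have heq := Equiv.sum_comp (Equiv.prodCongr
      (MulAction.toPerm (Units.mk0 ((j : ZMod q)) hc0))
      (MulAction.toPerm (Units.mk0 ((j : ZMod q)) hc0))) u
    rw [← heq]
    apply Finset.sum_congr rfl
    intro p _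
    simp only [hu, Equiv.prodCongr_apply, Prod.map, MulAction.toPerm_apply,
      Units.smul_def, Units.val_mk0]
    rw [hscal₁, hscal₂, ← smul_add, hscal₃, hcval, map_pow]
    ring
  have hT0 : ∑ p : (Fin d → ZMod q) × (Fin d → ZMod q), u p ^ 0
      = ((q : ℂ) ^ d * (q : ℂ) ^ d) := by
    simp only [pow_zero, Finset.sum_const, Finset.card_univ, nsmul_eq_mul, mul_one]
    rw [Fintype.card_prod]
    push_cast
    congr 1 <;>
      · rw [Fintype.card_pi]
        simp [ZMod.card]
  have hsplit : ∑ j ∈ Finset.range q, ∑ p : (Fin d → ZMod q) × (Fin d → ZMod q), u p ^ j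
      = (q : ℂ) ^ d * (q : ℂ) ^ d
        + ((q : ℂ) - 1) * ∑ p : (Fin d → ZMod q) × (Fin d → ZMod q), u p := by
    have hmem : 0 ∈ Finset.range q := Finset.mem_range.mpr (Fact.out (p := q.Prime)).pos
    calc ∑ j ∈ Finset.range q, ∑ p : (Fin d → ZMod q) × (Fin d → ZMod q), u p ^ j
        = (∑ p : (Fin d → ZMod q) × (Fin d → ZMod q), u p ^ 0)
          + ∑ j ∈ (Finset.range q).erase 0,
              ∑ p : (Fin d → ZMod q) × (Fin d → ZMod q), u p ^ j :=
          (Finset.add_sum_erase _ _ hmem).symm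
      _ = (q : ℂ) ^ d * (q : ℂ) ^ d
          + ((q : ℂ) - 1) * ∑ p : (Fin d → ZMod q) × (Fin d → ZMod q), u p := by
          rw [hT0, Finset.sum_congr rfl hTj, Finset.sum_const,
            Finset.card_erase_of_mem hmem, Finset.card_range, nsmul_eq_mul]
          congr 2
          push_cast [Nat.cast_sub (le_of_lt (hq2 q))]
          ring
  have hSig : ∑ p : (Fin d → ZMod q) × (Fin d → ZMod q), u p
      = (q : ℂ) ^ d * (q : ℂ) ^ d *
        ∑ ρ : Fin d → ZMod q, hatC q d g₁ ρ * hatC q d g₂ ρ * hatC q d g₃ ρ := by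
    rw [hu, Ssum g₁ g₂ g₃]
    congr 1
    apply Finset.sum_congr rfl
    intro ρ _
    rw [hat_real hΩ₃ hscal₃]
  have hE := hcard.trans (hsplit.trans (by rw [hSig]))
  have hQ0 : (q : ℂ) ≠ 0 := Nat.cast_ne_zero.2 (hq0 q)
  have hQd : (q : ℂ) ^ d ≠ 0 := pow_ne_zero _ hQ0
  rw [two_mul, pow_add]
  field_simp
  linear_combination hE
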